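/- arXiv:1803.03541 — 5 statements merged into one kernel-verified Lean document; each statement's English description precedes it below -/
import Mathlib

section
/- Let Γ be a countable infinite group and let f : Γ → ℝ be a finitely supported well-balanced function, i.e., Σ_γ f_γ = 0, f_γ ≤ 0 for all γ ≠ 1, f is self-adjoint (f_γ = f_{γ⁻¹}), and the support of f generates Γ. Then the map g ↦ fg (convolution) from C₀(Γ) to C₀(Γ) is injective, i.e., if g : Γ → ℝ vanishes at infinity and fg = 0, then g = 0. -/
open Filter Topology

/-- Convolution: `(f * g)(γ) = ∑ δ, f (γ δ⁻¹) g δ`. -/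
noncomputable def conv {Γ : Type*} [Group Γ] (f g : Γ → ℝ) : Γ → ℝ :=
  fun γ => ∑' δ : Γ, f (γ * δ⁻¹) * g δ

lemma conv_eq_sum {Γ : Type*} [Group Γ] (f g : Γ → ℝ)
    (hfin : (Function.support f).Finite) (γ : Γ) :
    conv f g γ = ∑ η ∈ hfin.toFinset, f η * g (η⁻¹ * γ) := by
  classical
  have h1 : conv f g γ
      = ∑ δ ∈ hfin.toFinset.image (fun η => η⁻¹ * γ), f (γ * δ⁻¹) * g δ := by
    apply tsum_eq_sum
    intro δ hδ
    have hz : f (γ * δ⁻¹) = 0 := by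
      by_contra h
      exact hδ (Finset.mem_image.2 ⟨γ * δ⁻¹, hfin.mem_toFinset.2 h, by group⟩)
    simp [hz]
  rw [h1, Finset.sum_image]
  · refine Finset.sum_congr rfl fun η _ => ?_
    have : γ * (η⁻¹ * γ)⁻¹ = η := by group
    rw [this]
  · intro a _ b _ h
    have := mul_right_cancel h
    simpa using this

lemma aux_nonpos {Γ : Type*} [Group Γ] [Infinite Γ]
    (f : Γ → ℝ)
    (hfin : (Function.support f).Finite)
    (hsum : ∑ᶠ γ, f γ = 0)
    (hneg : ∀ γ : Γ, γ ≠ 1 → f γ ≤ 0)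
    (hsa : ∀ γ : Γ, f γ = f γ⁻¹)
    (hgen : Subgroup.closure (Function.support f) = ⊤)
    (g : Γ → ℝ) (hg : Tendsto g cofinite (𝓝 0))
    (hfg : conv f g = 0) :
    ∀ γ, g γ ≤ 0 := by
  by_contra h
  push_neg at h
  obtain ⟨γ₁, hγ₁⟩ := h
  set K := hfin.toFinset with hKdef
  have hsumK : ∑ η ∈ K, f η = 0 := by
    rw [← hsum, finsum_eq_sum f hfin]
  have hconvK : ∀ γ, ∑ η ∈ K, f η * g (η⁻¹ * γ) = 0 := by
    intro γ
    rw [← conv_eq_sum f g hfin γ, hfg]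
    rfl
  -- existence of a global maximum
  have h1 : ∀ᶠ γ in cofinite, g γ < g γ₁ := hg.eventually_lt_const hγ₁
  have hTfin : {γ : Γ | ¬ g γ < g γ₁}.Finite := by
    rwa [Filter.eventually_cofinite] at h1
  have hTne : (hTfin.toFinset).Nonempty :=
    ⟨γ₁, hTfin.mem_toFinset.2 (lt_irrefl _)⟩
  obtain ⟨γ₀, hγ₀T, hγ₀max⟩ := hTfin.toFinset.exists_max_image g hTne
  have hmax : ∀ γ, g γ ≤ g γ₀ := by
    intro γ
    by_cases hγ : γ ∈ hTfin.toFinset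
    · exact hγ₀max γ hγ
    · have : g γ < g γ₁ := by
        by_contra hc
        exact hγ (hTfin.mem_toFinset.2 hc)
      exact this.le.trans (hγ₀max γ₁ (hTfin.mem_toFinset.2 (lt_irrefl _)))
  set M := g γ₀ with hMdef
  have hMpos : 0 < M := hγ₁.trans_le (hmax γ₁)
  -- maximum principle step
  have hstep : ∀ γ, g γ = M → ∀ η ∈ Function.support f, g (η⁻¹ * γ) = M := by
    intro γ hγ η hη
    have h0 : ∑ η ∈ K, f η * (g (η⁻¹ * γ) - M) = 0 := by
      have : ∑ η ∈ K, f η * (g (η⁻¹ * γ) - M)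
          = (∑ η ∈ K, f η * g (η⁻¹ * γ)) - (∑ η ∈ K, f η) * M := by
        rw [Finset.sum_mul, ← Finset.sum_sub_distrib]
        refine Finset.sum_congr rfl fun η _ => by ring
      rw [this, hconvK γ, hsumK]
      ring
    have hterm : ∀ η ∈ K, 0 ≤ f η * (g (η⁻¹ * γ) - M) := by
      intro η _
      by_cases hη1 : η = 1
      · subst hη1
        simp [hγ]
      · nlinarith [mul_nonneg (neg_nonneg.2 (hneg η hη1)) (neg_nonneg.2 (sub_nonpos.2 (hmax (η⁻¹ * γ))))]
    have hzero := (Finset.sum_eq_zero_iff_of_nonneg hterm).1 h0 η (hfin.mem_toFinset.2 hη)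
    rcases mul_eq_zero.1 hzero with h | h
    · exact absurd h hη
    · linarith [sub_eq_zero.1 h]
  have hstep' : ∀ γ, g γ = M → ∀ η ∈ Function.support f, g (η * γ) = M := by
    intro γ hγ η hη
    have hη' : η⁻¹ ∈ Function.support f := by
      rw [Function.mem_support, ← hsa η]
      exact hη
    simpa using hstep γ hγ η⁻¹ hη'
  -- propagate along the generated subgroup
  have key : ∀ x ∈ Subgroup.closure (Function.support f),
      (∀ γ, g γ = M → g (x * γ) = M) ∧ (∀ γ, g γ = M → g (x⁻¹ * γ) = M) := by
    intro x hx
    induction hx using Subgroup.closure_induction with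
    | mem η hη =>
      exact ⟨fun γ hγ => hstep' γ hγ η hη, fun γ hγ => hstep γ hγ η hη⟩
    | one => simp
    | mul x y hx hy ihx ihy =>
      refine ⟨fun γ hγ => ?_, fun γ hγ => ?_⟩
      · rw [mul_assoc]; exact ihx.1 _ (ihy.1 γ hγ)
      · rw [mul_inv_rev, mul_assoc]; exact ihy.2 _ (ihx.2 γ hγ)
    | inv x hx ih =>
      exact ⟨ih.2, by simpa using ih.1⟩
  have hall : ∀ y : Γ, g y = M := by
    intro y
    have hx : y * γ₀⁻¹ ∈ Subgroup.closure (Function.support f) := by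
      rw [hgen]; exact Subgroup.mem_top _
    have := (key _ hx).1 γ₀ rfl
    simpa using this
  have hconst : Tendsto (fun _ : Γ => M) cofinite (𝓝 (0 : ℝ)) := by
    have : g = fun _ : Γ => M := funext hall
    rwa [this] at hg
  have : M = 0 := tendsto_nhds_unique tendsto_const_nhds hconst
  linarith

/-- If `Γ` is a countably infinite group and `f` is a finitely supported well-balanced
real function on `Γ` (total sum `0`, nonpositive off the identity, self-adjoint, support
generating `Γ`), then convolution by `f` is injective on `C₀(Γ)`: if `g` vanishes
at infinity and `f g = 0` then `g = 0`. -/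
theorem wellBalanced_conv_injective (Γ : Type*) [Group Γ] [Countable Γ] [Infinite Γ]
    (f : Γ → ℝ)
    (hfin : (Function.support f).Finite)
    (hsum : ∑ᶠ γ, f γ = 0)
    (hneg : ∀ γ : Γ, γ ≠ 1 → f γ ≤ 0)
    (hsa : ∀ γ : Γ, f γ = f γ⁻¹)
    (hgen : Subgroup.closure (Function.support f) = ⊤)
    (g : Γ → ℝ) (hg : Tendsto g cofinite (𝓝 0))
    (hfg : conv f g = 0) :
    g = 0 := by
  have hg' : Tendsto (fun γ => -g γ) cofinite (𝓝 (0 : ℝ)) := by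
    simpa using hg.neg
  have hfg' : conv f (fun γ => -g γ) = 0 := by
    funext γ
    have : (fun δ => f (γ * δ⁻¹) * (-g δ)) = fun δ => -(f (γ * δ⁻¹) * g δ) := by
      funext δ; ring
    have h0 : conv f g γ = 0 := by rw [hfg]; rfl
    simp only [conv, this, tsum_neg]
    rw [show (∑' δ : Γ, f (γ * δ⁻¹) * g δ) = 0 from h0]
    simp
  have h1 := aux_nonpos f hfin hsum hneg hsa hgen g hg hfg
  have h2 := aux_nonpos f hfin hsum hneg hsa hgen _ hg' hfg'
  funext γ
  have := h2 γ
  have := h1 γ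
  simp only [Pi.zero_apply]
  linarith [h1 γ, h2 γ]
end

section
/- Let Γ be a countable group and f ∈ ℤ[Γ] a weakly expansive polynomial. Then the element ω ∈ C₀(Γ) with fω = 1_Γ is unique, and moreover ω f = 1_Γ as well. -/
open Filter Topology

open scoped Classical in
/-- The delta function at the identity, the unit for convolution. -/
noncomputable def delta1 (Γ : Type*) [Group Γ] : Γ → ℝ :=
  fun γ => if γ = 1 then 1 else 0

/-- `f` is weakly expansive: (we-1) convolution by `f` is injective on `C₀(Γ)`, and
(we-2) `f` has a right convolution-inverse in `C₀(Γ)`. -/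
def WeaklyExpansive {Γ : Type*} [Group Γ] (f : Γ → ℝ) : Prop :=
  (∀ g : Γ → ℝ, Tendsto g cofinite (𝓝 0) → conv f g = 0 → g = 0) ∧
  (∃ ω : Γ → ℝ, Tendsto ω cofinite (𝓝 0) ∧ conv f ω = delta1 Γ)


/-
Since `f` is finitely supported, convolution with `f` on either side is a finite sum, so it is
linear, maps `C₀(Γ)` into itself, and associates with any middle factor. Uniqueness is then
injectivity (we-1) applied to `ω - ω'`. For two-sidedness, `g := ω f - 1_Γ` lies in `C₀(Γ)` and
`f g = (f ω) f - f = 0`, so again (we-1) forces `g = 0`.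
-/

section Convolution

variable {Γ : Type*} [Group Γ]

lemma conv_eq_sum_right (f g : Γ → ℝ) (hf : (Function.support f).Finite) (γ : Γ) :
    conv g f γ = ∑ s ∈ hf.toFinset, g (γ * s⁻¹) * f s := by
  refine tsum_eq_sum' fun s hs => ?_
  simp only [Function.mem_support, ne_eq, mul_eq_zero, not_or] at hs
  simpa using hs.2

lemma conv_eq_sum_left (f g : Γ → ℝ) (hf : (Function.support f).Finite) (γ : Γ) :
    conv f g γ = ∑ s ∈ hf.toFinset, f s * g (s⁻¹ * γ) := by
  unfold conv
  rw [← ((Equiv.inv Γ).trans (Equiv.mulRight γ)).tsum_eq]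
  simp only [Equiv.trans_apply, Equiv.inv_apply, Equiv.coe_mulRight, mul_inv_rev, inv_inv,
    mul_inv_cancel_left]
  refine tsum_eq_sum' fun s hs => ?_
  simp only [Function.mem_support, ne_eq, mul_eq_zero, not_or] at hs
  simpa using hs.1

lemma conv_sub_right (f g h : Γ → ℝ) (hf : (Function.support f).Finite) :
    conv f (g - h) = conv f g - conv f h := by
  funext γ
  simp only [Pi.sub_apply, conv_eq_sum_left f _ hf, mul_sub, Finset.sum_sub_distrib]

lemma conv_delta1 (f : Γ → ℝ) : conv f (delta1 Γ) = f := by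
  funext γ
  rw [conv, tsum_eq_single 1 fun δ hδ => by simp [delta1, hδ]]
  simp [delta1]

lemma delta1_conv (f : Γ → ℝ) : conv (delta1 Γ) f = f := by
  funext γ
  rw [conv, tsum_eq_single γ fun δ hδ => by
    simp [delta1, mul_inv_eq_one, Ne.symm hδ]]
  simp [delta1]

lemma conv_conv_assoc (f ω h : Γ → ℝ) (hf : (Function.support f).Finite)
    (hh : (Function.support h).Finite) :
    conv f (conv ω h) = conv (conv f ω) h := by
  funext γ
  simp only [conv_eq_sum_left f _ hf, conv_eq_sum_right h _ hh, Finset.mul_sum,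
    Finset.sum_mul, mul_assoc]
  rw [Finset.sum_comm]

lemma tendsto_delta1_cofinite : Tendsto (delta1 Γ) cofinite (𝓝 0) := by
  refine tendsto_const_nhds.congr' (EventuallyEq.symm ?_)
  filter_upwards [(Set.finite_singleton (1 : Γ)).compl_mem_cofinite] with γ hγ
  simp [delta1, Set.mem_compl_singleton_iff.mp hγ]

lemma tendsto_conv_cofinite (f ω : Γ → ℝ) (hf : (Function.support f).Finite)
    (hω : Tendsto ω cofinite (𝓝 0)) :
    Tendsto (conv ω f) cofinite (𝓝 0) := by
  simp only [funext (conv_eq_sum_right f ω hf)]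
  simpa using tendsto_finsetSum hf.toFinset fun s _ =>
    (hω.comp (mul_left_injective s⁻¹).tendsto_cofinite).mul_const (f s)

lemma WeaklyExpansive.eq_of_conv_eq {f : Γ → ℝ} (hwe : WeaklyExpansive f)
    (hf : (Function.support f).Finite) {g g' : Γ → ℝ} (hg : Tendsto g cofinite (𝓝 0))
    (hg' : Tendsto g' cofinite (𝓝 0)) (h : conv f g = conv f g') : g = g' := by
  refine sub_eq_zero.mp (hwe.1 _ ?_ (by rw [conv_sub_right f g g' hf, h, sub_self]))
  have := hg.sub hg'
  rwa [sub_self] at this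

end Convolution

theorem weaklyExpansive_inverse_unique_and_twoSided_general (Γ : Type*) [Group Γ]
    (f : Γ → ℝ)
    (hfin : (Function.support f).Finite)
    (hwe : WeaklyExpansive f) :
    (∀ ω ω' : Γ → ℝ, Tendsto ω cofinite (𝓝 0) → Tendsto ω' cofinite (𝓝 0) →
      conv f ω = delta1 Γ → conv f ω' = delta1 Γ → ω = ω') ∧
    (∀ ω : Γ → ℝ, Tendsto ω cofinite (𝓝 0) → conv f ω = delta1 Γ →
      conv ω f = delta1 Γ) := by
  refine ⟨fun ω ω' hω hω' h h' => hwe.eq_of_conv_eq hfin hω hω' (h.trans h'.symm),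
    fun ω hω h => ?_⟩
  refine hwe.eq_of_conv_eq hfin (tendsto_conv_cofinite f ω hfin hω) tendsto_delta1_cofinite ?_
  rw [conv_conv_assoc f ω f hfin hfin, h, delta1_conv, conv_delta1]

/-- For `f ∈ ℤ[Γ]` weakly expansive, the element `ω ∈ C₀(Γ)` with `f ω = 1_Γ` is
unique, and it also satisfies `ω f = 1_Γ`. -/
theorem weaklyExpansive_inverse_unique_and_twoSided (Γ : Type*) [Group Γ] [Countable Γ]
    (f : Γ → ℝ)
    (hfin : (Function.support f).Finite) (hint : ∀ γ, ∃ m : ℤ, f γ = (m : ℝ))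
    (hwe : WeaklyExpansive f) :
    (∀ ω ω' : Γ → ℝ, Tendsto ω cofinite (𝓝 0) → Tendsto ω' cofinite (𝓝 0) →
      conv f ω = delta1 Γ → conv f ω' = delta1 Γ → ω = ω') ∧
    (∀ ω : Γ → ℝ, Tendsto ω cofinite (𝓝 0) → conv f ω = delta1 Γ →
      conv ω f = delta1 Γ) :=
  weaklyExpansive_inverse_unique_and_twoSided_general Γ f hfin hwe
end

section
/- Let Γ be a countable group and f ∈ ℤ[Γ]. If f is invertible in the Banach algebra ℓ¹(Γ), then f is weakly expansive: for every g ∈ C₀(Γ), fg = 0 implies g = 0, and there exists ω ∈ C₀(Γ) with fω = 1_Γ. -/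
open Filter Topology

/-- A function tending to `0` along the cofinite filter is bounded. -/
lemma bdd_of_c0 {Γ : Type*} (g : Γ → ℝ) (hg : Tendsto g cofinite (𝓝 0)) :
    ∃ M : ℝ, ∀ γ, |g γ| ≤ M := by
  classical
  have hfin : {γ | ¬ |g γ| < 1}.Finite := by
    have := hg.eventually (Metric.ball_mem_nhds (0:ℝ) one_pos)
    simpa [Filter.eventually_cofinite, Real.dist_eq] using this
  refine ⟨1 + ∑ γ ∈ hfin.toFinset, |g γ|, fun γ => ?_⟩
  by_cases h : |g γ| < 1
  · have : (0:ℝ) ≤ ∑ γ ∈ hfin.toFinset, |g γ| :=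
      Finset.sum_nonneg fun _ _ => abs_nonneg _
    linarith
  · have hmem : γ ∈ hfin.toFinset := by simpa using h
    have h1 : |g γ| ≤ ∑ γ ∈ hfin.toFinset, |g γ| :=
      Finset.single_le_sum (f := fun γ => |g γ|) (fun _ _ => abs_nonneg _) hmem
    linarith

/-- If `f ∈ ℤ[Γ]` is invertible in the Banach algebra `ℓ¹(Γ)`, then `f` is
weakly expansive. -/
theorem weaklyExpansive_of_l1_invertible (Γ : Type*) [Group Γ] [Countable Γ]
    (f : Γ → ℝ)
    (hfin : (Function.support f).Finite) (hint : ∀ γ, ∃ m : ℤ, f γ = (m : ℝ))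
    (hinv : ∃ ω : Γ → ℝ, Summable (fun γ => |ω γ|) ∧
      conv f ω = delta1 Γ ∧ conv ω f = delta1 Γ) :
    WeaklyExpansive f := by
  classical
  obtain ⟨ω, hω1, hfω, hωf⟩ := hinv
  have hωs : Summable ω := by
    have := hω1
    rwa [summable_abs_iff] at this
  constructor
  · -- injectivity
    intro g hg hfg
    obtain ⟨M, hM⟩ := bdd_of_c0 g hg
    have hM0 : 0 ≤ M := le_trans (abs_nonneg _) (hM 1)
    funext γ
    -- h p = ω (γ p.1⁻¹) * (f (p.1 p.2⁻¹) * g p.2)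
    set h : Γ × Γ → ℝ := fun p => ω (γ * p.1⁻¹) * (f (p.1 * p.2⁻¹) * g p.2) with hh
    -- change of variables equiv
    let e : Γ × Γ ≃ Γ × Γ :=
      { toFun := fun p => (p.1, p.2⁻¹ * p.1)
        invFun := fun p => (p.1, p.1 * p.2⁻¹)
        left_inv := fun p => by simp [mul_inv_rev, mul_assoc]
        right_inv := fun p => by simp [mul_inv_rev, mul_assoc] }
    have hf_sum : Summable fun s => |f s| * M :=
      (summable_of_ne_finset_zero (s := hfin.toFinset)
        (by intro s hs; simp only [Set.Finite.mem_toFinset, Function.mem_support, not_not] at hs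
            simp [hs])).mul_right M
    have hω_sum : Summable fun δ => |ω (γ * δ⁻¹)| := by
      refine Summable.congr
        ((((Equiv.inv Γ).trans (Equiv.mulLeft γ)).summable_iff (f := fun x => |ω x|)).2 hω1) ?_
      intro δ
      simp [Function.comp_def]
    have hmaj : Summable fun p : Γ × Γ => |ω (γ * p.1⁻¹)| * (|f p.2| * M) :=
      hω_sum.mul_of_nonneg hf_sum (fun _ => abs_nonneg _)
        (fun _ => mul_nonneg (abs_nonneg _) hM0)
    have hcomp : Summable (h ∘ e) := by
      apply Summable.of_abs
      apply hmaj.of_nonneg_of_le (fun _ => abs_nonneg _)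
      intro p
      have : (h ∘ e) p = ω (γ * p.1⁻¹) * (f p.2 * g (p.2⁻¹ * p.1)) := by
        simp [hh, e, mul_inv_rev, mul_assoc]
      rw [this, abs_mul, abs_mul]
      exact mul_le_mul_of_nonneg_left
        (mul_le_mul_of_nonneg_left (hM _) (abs_nonneg _)) (abs_nonneg _)
    have hsum : Summable h := e.summable_iff.1 hcomp
    -- main computation
    have key : g γ = ∑' δ : Γ, ω (γ * δ⁻¹) * conv f g δ := by
      have step1 : ∀ δ : Γ, ω (γ * δ⁻¹) * conv f g δ = ∑' ε : Γ, h (δ, ε) := by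
        intro δ
        rw [conv, ← tsum_mul_left]
      have step2 : (∑' δ : Γ, ∑' ε : Γ, h (δ, ε)) = ∑' ε : Γ, ∑' δ : Γ, h (δ, ε) := by
        exact (Summable.tsum_comm (f := fun δ ε => h (δ, ε)) hsum).symm
      have step3 : ∀ ε : Γ, (∑' δ : Γ, h (δ, ε)) = delta1 Γ (γ * ε⁻¹) * g ε := by
        intro ε
        rw [← hωf]
        have : (∑' δ : Γ, h (δ, ε)) = (∑' δ : Γ, ω (γ * δ⁻¹) * f (δ * ε⁻¹)) * g ε := by
          rw [← tsum_mul_right]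
          simp only [hh, mul_assoc]
        rw [this, conv]
        congr 1
        rw [← (Equiv.mulRight ε).tsum_eq (fun δ => ω (γ * δ⁻¹) * f (δ * ε⁻¹))]
        apply tsum_congr
        intro δ'
        simp [mul_inv_rev, mul_assoc]
      have step4 : (∑' ε : Γ, delta1 Γ (γ * ε⁻¹) * g ε) = g γ := by
        rw [tsum_eq_single γ]
        · simp [delta1]
        · intro ε hε
          have : γ * ε⁻¹ ≠ 1 := by
            intro hc
            apply hε
            have := mul_inv_eq_one.1 hc
            exact this.symm ▸ rfl
          simp [delta1, this]
      calc g γ = ∑' ε : Γ, delta1 Γ (γ * ε⁻¹) * g ε := step4.symm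
        _ = ∑' ε : Γ, ∑' δ : Γ, h (δ, ε) := by
            exact tsum_congr fun ε => (step3 ε).symm
        _ = ∑' δ : Γ, ∑' ε : Γ, h (δ, ε) := step2.symm
        _ = ∑' δ : Γ, ω (γ * δ⁻¹) * conv f g δ := tsum_congr fun δ => (step1 δ).symm
    rw [key, hfg]
    simp
  · exact ⟨ω, hωs.tendsto_cofinite_zero, hfω⟩
end

section
/- Let Γ be a countable torsion-free group such that for every prime p the group algebra (ℤ/pℤ)[Γ] and the rational group algebra ℚ[Γ] are integral domains (e.g., Γ = ℤ^d). Let f ∈ ℤ[Γ] be nonzero. Then the quotient module ℤ[Γ]/ℤ[Γ]f is torsion-free as an abelian group if and only if f is primitive (no integer n ≥ 2 divides all coefficients of f). -/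
/-!
Since `ℤ[Γ]` embeds in `ℚ[Γ]` it has no zero divisors. If `n ≥ 2` divides every coefficient,
`f = n • g`, and torsion-freeness puts `g` in `ℤ[Γ]f`, say `g = h * n • g`; cancelling `g` gives
`n • h = 1`, impossible. Conversely it suffices to cancel one prime `p` at a time: if
`p • g = h * f`, then reducing mod `p` gives `h̄ * f̄ = 0` in `𝔽_p[Γ]` with `f̄ ≠ 0` by primitivity,
so `p ∣ h` and `g = (h / p) * f`.
-/

namespace AddSubgroup

variable {A : Type*} [AddCommGroup A] {N : AddSubgroup A}

lemma mem_of_nsmul_mem_of_prime (hprime : ∀ p : ℕ, p.Prime → ∀ a : A, p • a ∈ N → a ∈ N)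
    {n : ℕ} (hn : n ≠ 0) {a : A} (ha : n • a ∈ N) : a ∈ N := by
  induction n using induction_on_primes generalizing a with
  | zero => exact absurd rfl hn
  | one => simpa using ha
  | prime_mul p k hp ih =>
    rw [mul_smul] at ha
    exact ih (right_ne_zero_of_mul hn) (hprime p hp _ ha)

lemma mem_of_zsmul_mem_of_prime (hprime : ∀ p : ℕ, p.Prime → ∀ a : A, p • a ∈ N → a ∈ N)
    {n : ℤ} (hn : n ≠ 0) {a : A} (ha : n • a ∈ N) : a ∈ N := by
  refine mem_of_nsmul_mem_of_prime hprime (Int.natAbs_ne_zero.mpr hn) ?_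
  rcases Int.natAbs_eq n with h | h <;> rw [h] at ha
  · exact_mod_cast ha
  · simpa only [neg_smul, natCast_zsmul, neg_mem_iff] using ha

end AddSubgroup

namespace MonoidAlgebra

variable {M : Type*} [Monoid M]

instance {R : Type*} [Semiring R] [IsAddTorsionFree R] : IsAddTorsionFree (MonoidAlgebra R M) :=
  Function.Injective.isAddTorsionFree (coeffAddEquiv (R := R) (M := M)).toAddMonoidHom
    coeffAddEquiv.injective

lemma mapRingHom_zmod_eq_zero_iff (p : ℕ) (x : MonoidAlgebra ℤ M) :
    mapRingHom M (Int.castRingHom (ZMod p)) x = 0 ↔ ∀ m, (p : ℤ) ∣ x.coeff m := by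
  simp only [← coeff_inj, Finsupp.ext_iff, coeff_mapRingHom, coeff_zero, Finsupp.coe_zero,
    Pi.zero_apply, eq_intCast, ZMod.intCast_zmod_eq_zero_iff_dvd]

lemma exists_eq_zsmul_of_forall_dvd_coeff {n : ℤ} {x : MonoidAlgebra ℤ M}
    (h : ∀ m, n ∣ x.coeff m) : ∃ y : MonoidAlgebra ℤ M, x = n • y :=
  ⟨ofCoeff (Finsupp.mapRange (· / n) (Int.zero_ediv n) x.coeff), by
    ext m
    rw [coeff_smul_apply, coeff_ofCoeff, Finsupp.mapRange_apply, smul_eq_mul,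
      Int.mul_ediv_cancel' (h m)]⟩

lemma noZeroDivisors_int_of_rat [NoZeroDivisors (MonoidAlgebra ℚ M)] :
    NoZeroDivisors (MonoidAlgebra ℤ M) :=
  (map_injective (Int.castRingHom ℚ).toAddMonoidHom Int.cast_injective).noZeroDivisors
    (mapRingHom M (Int.castRingHom ℚ)) (map_zero _) (map_mul _)

lemma forall_dvd_coeff_of_forall_dvd_coeff_mul {p : ℕ}
    [NoZeroDivisors (MonoidAlgebra (ZMod p) M)]
    {f h : MonoidAlgebra ℤ M} (hf : ¬ ∀ m, (p : ℤ) ∣ f.coeff m)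
    (hhf : ∀ m, (p : ℤ) ∣ (h * f).coeff m) : ∀ m, (p : ℤ) ∣ h.coeff m := by
  rw [← mapRingHom_zmod_eq_zero_iff] at hf hhf ⊢
  rw [map_mul] at hhf
  exact (mul_eq_zero.mp hhf).resolve_right hf

lemma mem_span_of_prime_zsmul_mem_span {p : ℕ} (hp : p.Prime)
    [NoZeroDivisors (MonoidAlgebra (ZMod p) M)] {f : MonoidAlgebra ℤ M}
    (hf : ¬ ∀ m, (p : ℤ) ∣ f.coeff m) {g : MonoidAlgebra ℤ M}
    (hg : (p : ℤ) • g ∈ Ideal.span {f}) : g ∈ Ideal.span {f} := by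
  obtain ⟨h, hgh⟩ := Ideal.mem_span_singleton'.mp hg
  have hh : ∀ m, (p : ℤ) ∣ h.coeff m := forall_dvd_coeff_of_forall_dvd_coeff_mul hf fun m => by
    rw [hgh, coeff_smul_apply, smul_eq_mul]
    exact dvd_mul_right _ _
  obtain ⟨h', rfl⟩ := exists_eq_zsmul_of_forall_dvd_coeff hh
  have hp0 : (p : ℤ) ≠ 0 := by exact_mod_cast hp.ne_zero
  refine Ideal.mem_span_singleton'.mpr ⟨h', zsmul_right_injective hp0 ?_⟩
  simpa only [smul_mul_assoc] using hgh

lemma mem_span_of_zsmul_mem_span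
    (hp : ∀ p : ℕ, p.Prime → NoZeroDivisors (MonoidAlgebra (ZMod p) M)) {f : MonoidAlgebra ℤ M}
    (hprim : ∀ n : ℤ, 2 ≤ n → ¬ ∀ m, n ∣ f.coeff m) {n : ℤ} (hn : n ≠ 0)
    {g : MonoidAlgebra ℤ M} (hg : n • g ∈ Ideal.span {f}) : g ∈ Ideal.span {f} := by
  refine AddSubgroup.mem_of_zsmul_mem_of_prime (N := (Ideal.span {f}).toAddSubgroup)
    (fun p hprime a ha => ?_) hn hg
  have := hp p hprime
  exact mem_span_of_prime_zsmul_mem_span hprime (hprim p (by exact_mod_cast hprime.two_le))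
    (by simpa only [natCast_zsmul, Submodule.mem_toAddSubgroup] using ha)

lemma eq_one_or_neg_one_of_zsmul_eq_one {n : ℤ} {h : MonoidAlgebra ℤ M} (hnh : n • h = 1) :
    n = 1 ∨ n = -1 := by
  have := congrArg (·.coeff 1) hnh
  simp only [coeff_smul_apply, coeff_one_one, smul_eq_mul] at this
  exact Int.eq_one_or_neg_one_of_mul_eq_one this

lemma not_forall_dvd_coeff_of_mem_span_of_zsmul_mem_span [NoZeroDivisors (MonoidAlgebra ℤ M)]
    {f : MonoidAlgebra ℤ M} (hf : f ≠ 0)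
    (htors : ∀ (g : MonoidAlgebra ℤ M) (n : ℤ), n ≠ 0 →
      n • g ∈ Ideal.span {f} → g ∈ Ideal.span {f})
    {n : ℤ} (hn : 2 ≤ n) : ¬ ∀ m, n ∣ f.coeff m := by
  intro hdvd
  obtain ⟨g, rfl⟩ := exists_eq_zsmul_of_forall_dvd_coeff hdvd
  obtain ⟨h, hhg⟩ := Ideal.mem_span_singleton'.mp
    (htors g n (by omega) (Ideal.mem_span_singleton_self _))
  have hg : g ≠ 0 := by rintro rfl; simp at hf
  have hnh : (n • h - 1) * g = 0 := by
    rw [sub_mul, smul_mul_assoc, ← mul_smul_comm, hhg, one_mul, sub_self]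
  have hunit : n • h = 1 := sub_eq_zero.mp ((mul_eq_zero.mp hnh).resolve_right hg)
  have := eq_one_or_neg_one_of_zsmul_eq_one hunit
  omega

end MonoidAlgebra

open MonoidAlgebra in
theorem quotient_torsionFree_iff_primitive_general (Γ : Type*) [Group Γ]
    (hQ : IsDomain (MonoidAlgebra ℚ Γ))
    (hp : ∀ p : ℕ, p.Prime → IsDomain (MonoidAlgebra (ZMod p) Γ))
    (f : MonoidAlgebra ℤ Γ) (hf : f ≠ 0) :
    ((∀ (g : MonoidAlgebra ℤ Γ) (m : ℤ), m ≠ 0 →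
        (∃ h : MonoidAlgebra ℤ Γ, m • g = h * f) →
        ∃ h : MonoidAlgebra ℤ Γ, g = h * f) ↔
      ∀ m : ℤ, 2 ≤ m → ¬ (∀ γ : Γ, m ∣ f.coeff γ)) := by
  have := noZeroDivisors_int_of_rat (M := Γ)
  have hspan (x : MonoidAlgebra ℤ Γ) : (∃ h, x = h * f) ↔ x ∈ Ideal.span {f} := by
    simp only [Ideal.mem_span_singleton', eq_comm]
  simp only [hspan]
  have hpZ (p : ℕ) (hprime : p.Prime) : NoZeroDivisors (MonoidAlgebra (ZMod p) Γ) :=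
    have := hp p hprime; inferInstance
  exact ⟨fun htors _ => not_forall_dvd_coeff_of_mem_span_of_zsmul_mem_span hf htors,
    fun hprim _ _ hn => mem_span_of_zsmul_mem_span hpZ hprim hn⟩

/-- For `Γ` a countable torsion-free group whose group algebras over `ℚ` and over
`ℤ/pℤ` (for every prime `p`) are integral domains, and `f ∈ ℤ[Γ]` nonzero, the
quotient `ℤ[Γ]/ℤ[Γ]f` is torsion-free as an abelian group if and only if `f` is
primitive (no integer `n ≥ 2` divides all coefficients of `f`). -/
theorem quotient_torsionFree_iff_primitive (Γ : Type*) [Group Γ] [Countable Γ]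
    (htf : ∀ g : Γ, g ≠ 1 → ¬IsOfFinOrder g)
    (hQ : IsDomain (MonoidAlgebra ℚ Γ))
    (hp : ∀ p : ℕ, p.Prime → IsDomain (MonoidAlgebra (ZMod p) Γ))
    (f : MonoidAlgebra ℤ Γ) (hf : f ≠ 0) :
    ((∀ (g : MonoidAlgebra ℤ Γ) (m : ℤ), m ≠ 0 →
        (∃ h : MonoidAlgebra ℤ Γ, m • g = h * f) →
        ∃ h : MonoidAlgebra ℤ Γ, g = h * f) ↔
      ∀ m : ℤ, 2 ≤ m → ¬ (∀ γ : Γ, m ∣ f.coeff γ)) :=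
  quotient_torsionFree_iff_primitive_general Γ hQ hp f hf
end

section
/- Let Γ be a countable group, k,n ∈ ℕ, and A ∈ M_{n,k}(ℤ[Γ]). If the linear map C₀(Γ)^k → C₀(Γ)^n sending g to gA* is injective, then the map Δ(X_A) → ℤ[Γ]^n/ℤ[Γ]^k A* sending a homoclinic point x to the class of x̃A*, where x̃ ∈ C₀(Γ)^k is any lift of x, is a well-defined injective Γ-equivariant group homomorphism. -/
open Filter Topology

/-- The involution `f ↦ f*`, `(f*)(γ) = f(γ⁻¹)`. -/
def starFn {Γ : Type*} [Group Γ] (f : Γ → ℝ) : Γ → ℝ := fun γ => f γ⁻¹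

/-- The shift action of `Γ`: `(γ • u)(γ') = u (γ⁻¹ γ')`. -/
def shift {Γ A : Type*} [Group Γ] (γ : Γ) (u : Γ → A) : Γ → A :=
  fun γ' => u (γ⁻¹ * γ')

/-- `h` belongs to `ℤ[Γ]`: integer-valued with finite support. -/
def InZG {Γ : Type*} (h : Γ → ℝ) : Prop :=
  (∀ γ, ∃ m : ℤ, h γ = (m : ℝ)) ∧ (Function.support h).Finite

variable {Γ : Type*} [Group Γ] {n k : ℕ}

/-- For `A ∈ M_{n,k}(ℤ[Γ])` and `g ∈ (·)^k`, the product `g A*`: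
`(g A*)^j = ∑_i g^i (a^{ji})*`. -/
noncomputable def mulAstar (A : Fin n → Fin k → Γ → ℝ) (g : Fin k → Γ → ℝ) :
    Fin n → Γ → ℝ :=
  fun j γ => ∑ i : Fin k, conv (g i) (starFn (A j i)) γ

/-- Two elements of `ℤ[Γ]^n` represent the same class modulo `ℤ[Γ]^k A*`. -/
def RelModA (A : Fin n → Fin k → Γ → ℝ) (a b : Fin n → Γ → ℝ) : Prop :=
  ∃ h : Fin k → Γ → ℝ, (∀ i, InZG (h i)) ∧ a - b = mulAstar A h

/-- `g` is a `C₀`-lift of the configuration `x ∈ (𝕋^k)^Γ`. -/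
def IsLift (x : Fin k → Γ → AddCircle (1 : ℝ)) (g : Fin k → Γ → ℝ) : Prop :=
  (∀ i, Tendsto (g i) cofinite (𝓝 (0 : ℝ))) ∧
  (∀ i γ, ((g i γ : ℝ) : AddCircle (1 : ℝ)) = x i γ)

/-- `x` is a homoclinic point of the group subshift `X_A`: it lies in `X_A`
(some bounded lift `g` has `g A*` integer-valued) and is homoclinic to `0`. -/
def HomXA (A : Fin n → Fin k → Γ → ℝ) (x : Fin k → Γ → AddCircle (1 : ℝ)) : Prop :=
  (∃ g : Fin k → Γ → ℝ, (∀ i, ∃ C : ℝ, ∀ γ, |g i γ| ≤ C) ∧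
      (∀ i γ, ((g i γ : ℝ) : AddCircle (1 : ℝ)) = x i γ) ∧
      (∀ j γ, ∃ m : ℤ, mulAstar A g j γ = (m : ℝ))) ∧
  (∀ i, Tendsto (x i) cofinite (𝓝 (0 : AddCircle (1 : ℝ))))

/-!
Two `C₀`-lifts of the same point differ by an integer-valued `C₀` function, i.e. by an element
of `ℤ[Γ]^k`; this gives well-definedness and additivity. For a homoclinic `x ∈ X_A`, `x̃ A*` differs
from the integer-valued `g A*` of a bounded lift `g` by `(x̃ - g) A*` with `x̃ - g` integer-valued,
and it is `C₀`, so it lies in `ℤ[Γ]^n`. If `x̃ A* - ỹ A* = h A*` with `h ∈ ℤ[Γ]^k`, then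
`x̃ - ỹ - h` is a `C₀` element of the kernel of `A*`, so `x̃ - ỹ = h` is integer-valued and `x = y`.
-/

def IsIntValued {α : Type*} (f : α → ℝ) : Prop :=
  ∀ a, ∃ m : ℤ, f a = m

lemma exists_int_eq_sum {ι : Type*} (s : Finset ι) {f : ι → ℝ}
    (hf : ∀ i ∈ s, ∃ m : ℤ, f i = m) : ∃ m : ℤ, ∑ i ∈ s, f i = m :=
  Finset.sum_induction f (fun x => ∃ m : ℤ, x = m)
    (fun _ _ ⟨m, hm⟩ ⟨m', hm'⟩ => ⟨m + m', by simp [hm, hm']⟩) ⟨0, by simp⟩ hf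

section IntValued

variable {α : Type*}

lemma IsIntValued.add {f g : α → ℝ} (hf : IsIntValued f) (hg : IsIntValued g) :
    IsIntValued (f + g) := fun a => by
  obtain ⟨m, hm⟩ := hf a
  obtain ⟨m', hm'⟩ := hg a
  exact ⟨m + m', by simp [hm, hm']⟩

lemma isIntValued_sub_iff {f g : α → ℝ} :
    IsIntValued (f - g) ↔ ∀ a, (f a : AddCircle (1 : ℝ)) = g a := by
  refine forall_congr' fun a => ?_
  rw [← sub_eq_zero, ← AddCircle.coe_sub, AddCircle.coe_eq_zero_iff]
  simp [eq_comm]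

lemma InZG.of_isIntValued_of_tendsto {f : α → ℝ} (hf : IsIntValued f)
    (h0 : Tendsto f cofinite (𝓝 0)) : InZG f := by
  refine ⟨hf, (eventually_cofinite.mp (Metric.tendsto_nhds.mp h0 1 one_pos)).subset ?_⟩
  intro a ha
  obtain ⟨m, hm⟩ := hf a
  have hm0 : m ≠ 0 := by rintro rfl; exact ha (by simpa using hm)
  simpa [Real.dist_eq, hm] using (Int.cast_le (R := ℝ)).mpr (Int.one_le_abs hm0)

lemma tendsto_cofinite_zero_of_support_finite {f : α → ℝ} (hf : f.support.Finite) :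
    Tendsto f cofinite (𝓝 0) :=
  tendsto_nhds_of_eventually_eq <| hf.eventually_cofinite_notMem.mono fun _ => by simp

end IntValued

lemma support_starFn_finite {b : Γ → ℝ} (hb : b.support.Finite) : (starFn b).support.Finite :=
  hb.preimage inv_injective.injOn

lemma InZG.starFn {b : Γ → ℝ} (hb : InZG b) : InZG (starFn b) :=
  ⟨fun γ => hb.1 γ⁻¹, support_starFn_finite hb.2⟩

section Convolution

variable {f f' b : Γ → ℝ}

lemma conv_eq_sum_s17 (hb : b.support.Finite) (γ : Γ) :
    conv f b γ = ∑ δ ∈ hb.toFinset, f (γ * δ⁻¹) * b δ :=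
  tsum_eq_sum fun δ hδ => by simp [Function.notMem_support.mp (mt hb.mem_toFinset.mpr hδ)]

lemma conv_add_left (hb : b.support.Finite) : conv (f + f') b = conv f b + conv f' b := by
  funext γ
  simp only [Pi.add_apply, conv_eq_sum_s17 hb, add_mul, Finset.sum_add_distrib]

lemma conv_zero_left : conv (0 : Γ → ℝ) b = 0 := by
  funext γ
  simp [conv]

lemma conv_shift_left (γ₀ : Γ) : conv (shift γ₀ f) b = shift γ₀ (conv f b) := by
  funext γ
  simp only [conv, shift, mul_assoc]

lemma tendsto_conv (hb : b.support.Finite) (hf : Tendsto f cofinite (𝓝 0)) :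
    Tendsto (conv f b) cofinite (𝓝 0) := by
  have hterm (δ : Γ) : Tendsto (fun γ => f (γ * δ⁻¹) * b δ) cofinite (𝓝 0) := by
    simpa using (hf.comp (mul_left_injective δ⁻¹).tendsto_cofinite).mul_const (b δ)
  simpa [← conv_eq_sum_s17 hb] using tendsto_finsetSum hb.toFinset fun δ _ => hterm δ

lemma IsIntValued.conv (hf : IsIntValued f) (hb : InZG b) : IsIntValued (conv f b) := by
  intro γ
  rw [conv_eq_sum_s17 hb.2]
  refine exists_int_eq_sum _ fun δ _ => ?_
  obtain ⟨m, hm⟩ := hf (γ * δ⁻¹)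
  obtain ⟨m', hm'⟩ := hb.1 δ
  exact ⟨m * m', by simp [hm, hm']⟩

end Convolution

section MulAstar

variable {A : Fin n → Fin k → Γ → ℝ} {g : Fin k → Γ → ℝ}

lemma mulAstar_add (hA : ∀ j i, (A j i).support.Finite) (g g' : Fin k → Γ → ℝ) :
    mulAstar A (g + g') = mulAstar A g + mulAstar A g' := by
  funext j γ
  simp only [mulAstar, Pi.add_apply, conv_add_left (support_starFn_finite (hA j _)),
    Finset.sum_add_distrib]

lemma mulAstar_sub (hA : ∀ j i, (A j i).support.Finite) (g g' : Fin k → Γ → ℝ) :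
    mulAstar A (g - g') = mulAstar A g - mulAstar A g' :=
  (AddMonoidHom.mk' (mulAstar A) (mulAstar_add hA)).map_sub g g'

lemma mulAstar_zero : mulAstar A (0 : Fin k → Γ → ℝ) = 0 := by
  funext j γ
  simp [mulAstar, conv_zero_left]

lemma mulAstar_shift (γ₀ : Γ) (g : Fin k → Γ → ℝ) :
    mulAstar A (fun i => shift γ₀ (g i)) = fun j => shift γ₀ (mulAstar A g j) := by
  funext j γ
  simp only [mulAstar, conv_shift_left]
  rfl

lemma tendsto_mulAstar (hA : ∀ j i, (A j i).support.Finite)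
    (hg : ∀ i, Tendsto (g i) cofinite (𝓝 0)) (j : Fin n) :
    Tendsto (mulAstar A g j) cofinite (𝓝 0) := by
  have := tendsto_finsetSum Finset.univ fun i _ =>
    tendsto_conv (support_starFn_finite (hA j i)) (hg i)
  rwa [Finset.sum_const_zero] at this

lemma IsIntValued.mulAstar (hA : ∀ j i, InZG (A j i)) (hg : ∀ i, IsIntValued (g i))
    (j : Fin n) : IsIntValued (mulAstar A g j) :=
  fun γ => exists_int_eq_sum _ fun i _ => (hg i).conv (hA j i).starFn γ

lemma relModA_refl (a : Fin n → Γ → ℝ) : RelModA A a a :=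
  ⟨0, fun _ => ⟨fun _ => ⟨0, by simp⟩, by simp⟩, by rw [sub_self, mulAstar_zero]⟩

end MulAstar

section LiftArithmetic

variable {α : Type*} {x y : Fin k → α → AddCircle (1 : ℝ)} {g g' gx gy : Fin k → α → ℝ}

lemma IsLift.inZG_sub (hg : IsLift x g) (hg' : IsLift x g') (i : Fin k) : InZG (g i - g' i) :=
  .of_isIntValued_of_tendsto (isIntValued_sub_iff.mpr fun γ => (hg.2 i γ).trans (hg'.2 i γ).symm)
    (by rw [← sub_zero (0 : ℝ)]; exact (hg.1 i).sub (hg'.1 i))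

lemma IsLift.add (hgx : IsLift x gx) (hgy : IsLift y gy) : IsLift (x + y) (gx + gy) :=
  ⟨fun i => by rw [← add_zero (0 : ℝ)]; exact (hgx.1 i).add (hgy.1 i),
    fun i γ => by simp [hgx.2 i γ, hgy.2 i γ]⟩

end LiftArithmetic

section Lifts

variable {A : Fin n → Fin k → Γ → ℝ} {x y : Fin k → Γ → AddCircle (1 : ℝ)}
  {g g' gx gy : Fin k → Γ → ℝ}

lemma IsLift.shift (hg : IsLift x g) (γ₀ : Γ) :
    IsLift (fun i => shift γ₀ (x i)) (fun i => shift γ₀ (g i)) :=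
  ⟨fun i => (hg.1 i).comp (mul_right_injective γ₀⁻¹).tendsto_cofinite,
    fun i γ => hg.2 i (γ₀⁻¹ * γ)⟩

lemma IsLift.relModA (hA : ∀ j i, (A j i).support.Finite) (hg : IsLift x g)
    (hg' : IsLift x g') : RelModA A (mulAstar A g) (mulAstar A g') :=
  ⟨g - g', hg.inZG_sub hg', (mulAstar_sub hA g g').symm⟩

lemma HomXA.inZG_mulAstar (hA : ∀ j i, InZG (A j i)) (hx : HomXA A x) (hg : IsLift x g)
    (j : Fin n) : InZG (mulAstar A g j) := by
  obtain ⟨⟨g₀, -, hg₀, hg₀A⟩, -⟩ := hx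
  have hAfin : ∀ j i, (A j i).support.Finite := fun j i => (hA j i).2
  have hdiff : ∀ i, IsIntValued (g i - g₀ i) :=
    fun i => isIntValued_sub_iff.mpr fun γ => (hg.2 i γ).trans (hg₀ i γ).symm
  have hsplit : mulAstar A g j = mulAstar A g₀ j + mulAstar A (g - g₀) j := by
    rw [mulAstar_sub hAfin, Pi.sub_apply, add_sub_cancel]
  refine .of_isIntValued_of_tendsto ?_ (tendsto_mulAstar hAfin hg.1 j)
  rw [hsplit]
  exact IsIntValued.add (hg₀A j) (IsIntValued.mulAstar hA hdiff j)

lemma IsLift.eq_of_relModA (hA : ∀ j i, (A j i).support.Finite)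
    (hinj : ∀ g : Fin k → Γ → ℝ, (∀ i, Tendsto (g i) cofinite (𝓝 0)) → mulAstar A g = 0 → g = 0)
    (hgx : IsLift x gx) (hgy : IsLift y gy) (hrel : RelModA A (mulAstar A gx) (mulAstar A gy)) :
    x = y := by
  obtain ⟨h, hh, hdiff⟩ := hrel
  have hker : mulAstar A (gx - gy - h) = 0 := by
    rw [mulAstar_sub hA, mulAstar_sub hA, hdiff, sub_self]
  have hc0 : ∀ i, Tendsto ((gx - gy - h) i) cofinite (𝓝 0) := fun i => by
    have hlim := ((hgx.1 i).sub (hgy.1 i)).sub (tendsto_cofinite_zero_of_support_finite (hh i).2)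
    rwa [sub_self, sub_self] at hlim
  have hlift : gx - gy = h := sub_eq_zero.mp (hinj _ hc0 hker)
  funext i γ
  rw [← hgx.2 i γ, ← hgy.2 i γ]
  exact isIntValued_sub_iff.mp (hlift ▸ (hh i).1 : IsIntValued ((gx - gy) i)) γ

end Lifts

theorem homoclinic_embedding_general (Γ : Type*) [Group Γ] (n k : ℕ)
    (A : Fin n → Fin k → Γ → ℝ) (hA : ∀ j i, InZG (A j i))
    (hinj : ∀ g : Fin k → Γ → ℝ, (∀ i, Tendsto (g i) cofinite (𝓝 (0 : ℝ))) →
      mulAstar A g = 0 → g = 0) :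
    -- takes values in ℤ[Γ]^n
    (∀ (x : Fin k → Γ → AddCircle (1 : ℝ)), HomXA A x →
      ∀ g, IsLift x g → ∀ j, InZG (mulAstar A g j)) ∧
    -- well-defined (independent of the chosen lift)
    (∀ (x : Fin k → Γ → AddCircle (1 : ℝ)), HomXA A x →
      ∀ g g', IsLift x g → IsLift x g' →
        RelModA A (mulAstar A g) (mulAstar A g')) ∧
    -- group homomorphism
    (∀ (x y : Fin k → Γ → AddCircle (1 : ℝ)), HomXA A x → HomXA A y →
      ∀ gx gy gz, IsLift x gx → IsLift y gy → IsLift (x + y) gz →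
        RelModA A (mulAstar A gz) (mulAstar A gx + mulAstar A gy)) ∧
    -- injective
    (∀ (x y : Fin k → Γ → AddCircle (1 : ℝ)), HomXA A x → HomXA A y →
      ∀ gx gy, IsLift x gx → IsLift y gy →
        RelModA A (mulAstar A gx) (mulAstar A gy) → x = y) ∧
    -- Γ-equivariant
    (∀ (x : Fin k → Γ → AddCircle (1 : ℝ)), HomXA A x →
      ∀ gx, IsLift x gx → ∀ γ₀ : Γ,
        IsLift (fun i => shift γ₀ (x i)) (fun i => shift γ₀ (gx i)) ∧
        RelModA A (mulAstar A (fun i => shift γ₀ (gx i)))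
          (fun j => shift γ₀ (mulAstar A gx j))) := by
  have hAfin : ∀ j i, (A j i).support.Finite := fun j i => (hA j i).2
  refine ⟨fun x hx g hg j => hx.inZG_mulAstar hA hg j,
    fun x _ g g' hg hg' => hg.relModA hAfin hg', ?_,
    fun x y _ _ gx gy hgx hgy => hgx.eq_of_relModA hAfin hinj hgy,
    fun x _ gx hgx γ₀ => ⟨hgx.shift γ₀, mulAstar_shift γ₀ gx ▸ relModA_refl _⟩⟩
  intro x y _ _ gx gy gz hgx hgy hgz
  rw [← mulAstar_add hAfin]
  exact hgz.relModA hAfin (hgx.add hgy)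

/-- If the map `C₀(Γ)^k → C₀(Γ)^n`, `g ↦ g A*`, is injective, then
`x ↦ [x̃ A*] ∈ ℤ[Γ]^n / ℤ[Γ]^k A*` (for any `C₀`-lift `x̃` of the homoclinic point
`x ∈ Δ(X_A)`) is a well-defined, injective, `Γ`-equivariant group homomorphism. -/
theorem homoclinic_embedding (Γ : Type*) [Group Γ] [Countable Γ] (n k : ℕ)
    (A : Fin n → Fin k → Γ → ℝ) (hA : ∀ j i, InZG (A j i))
    (hinj : ∀ g : Fin k → Γ → ℝ, (∀ i, Tendsto (g i) cofinite (𝓝 (0 : ℝ))) →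
      mulAstar A g = 0 → g = 0) :
    -- takes values in ℤ[Γ]^n
    (∀ (x : Fin k → Γ → AddCircle (1 : ℝ)), HomXA A x →
      ∀ g, IsLift x g → ∀ j, InZG (mulAstar A g j)) ∧
    -- well-defined (independent of the chosen lift)
    (∀ (x : Fin k → Γ → AddCircle (1 : ℝ)), HomXA A x →
      ∀ g g', IsLift x g → IsLift x g' →
        RelModA A (mulAstar A g) (mulAstar A g')) ∧
    -- group homomorphism
    (∀ (x y : Fin k → Γ → AddCircle (1 : ℝ)), HomXA A x → HomXA A y →
      ∀ gx gy gz, IsLift x gx → IsLift y gy → IsLift (x + y) gz →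
        RelModA A (mulAstar A gz) (mulAstar A gx + mulAstar A gy)) ∧
    -- injective
    (∀ (x y : Fin k → Γ → AddCircle (1 : ℝ)), HomXA A x → HomXA A y →
      ∀ gx gy, IsLift x gx → IsLift y gy →
        RelModA A (mulAstar A gx) (mulAstar A gy) → x = y) ∧
    -- Γ-equivariant
    (∀ (x : Fin k → Γ → AddCircle (1 : ℝ)), HomXA A x →
      ∀ gx, IsLift x gx → ∀ γ₀ : Γ,
        IsLift (fun i => shift γ₀ (x i)) (fun i => shift γ₀ (gx i)) ∧
        RelModA A (mulAstar A (fun i => shift γ₀ (gx i)))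
          (fun j => shift γ₀ (mulAstar A gx j))) :=
  homoclinic_embedding_general Γ n k A hA hinj
end
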